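/- arXiv:2301.07278 — 3 statements merged into one kernel-verified Lean document; each statement's English description precedes it below -/
import Mathlib

section
/- Let a : ℕ → ℕ → ℂ, N ∈ ℕ, m ∈ ℕ, and k : Fin m → ℕ. Then the sum over injective functions n : Fin m → Fin N of ∏_{j} a (n j) (k j) equals ∑_{σ ∈ S_m} sign(σ) · ∏_{c ∈ cycles(σ)} (∑_{n < N} ∏_{j ∈ c} a n (k j)), where cycles(σ) is the decomposition of σ into disjoint cycles (including fixed points as 1-cycles), and for a cycle with support c the inner product is over the indices j in the orbit of that cycle. -/
open Finset

/-- The set of orbits of a permutation of `Fin m` (fixed points give singleton orbits). -/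
def orbits {m : ℕ} (σ : Equiv.Perm (Fin m)) : Finset (Finset (Fin m)) :=
  Finset.univ.image fun j => Finset.univ.filter fun i => σ.SameCycle j i

/-!
Expanding the product over the orbits of `σ`, `∏_O A_O` is the sum of `∏ j, a (n j) (k j)`
over the `n : Fin m → Fin N` that are constant on these orbits, i.e. with `n ∘ σ = n`. After
exchanging the sums, the coefficient of `n` is the sum of `sign σ` over the stabiliser of `n`.
It is `1` when `n` is injective, since the stabiliser is then trivial, and `0` otherwise: then
`n` is fixed by a transposition, and multiplying by it pairs off the stabiliser into
permutations of opposite sign.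
-/

open Equiv Equiv.Perm Function

section Sign

variable {α β : Type*} [Fintype α] [DecidableEq α]

theorem sum_sign_eq_zero_of_mul_swap_mem {S : Finset (Perm α)} {i j : α} (hij : i ≠ j)
    (hS : ∀ σ ∈ S, σ * swap i j ∈ S) : ∑ σ ∈ S, (sign σ : ℤ) = 0 :=
  sum_involution (fun σ _ => σ * swap i j) (by simp [sign_swap hij])
    (fun σ _ _ => by simpa using hij) hS (by simp [mul_assoc])

theorem sum_sign_filter_comp_eq_self [DecidableEq β] (n : α → β) :
    ∑ σ ∈ univ.filter (fun σ : Perm α => n ∘ σ = n), (sign σ : ℤ) =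
      if Injective n then 1 else 0 := by
  split_ifs with hn
  · have : univ.filter (fun σ : Perm α => n ∘ σ = n) = {1} := by
      ext σ
      simpa [DFunLike.ext'_iff] using hn.comp_left.eq_iff (a := σ) (b := id)
    simp [this]
  · obtain ⟨i, j, hnij, hij⟩ := not_injective_iff.1 hn
    refine sum_sign_eq_zero_of_mul_swap_mem hij fun σ hσ => ?_
    have hswap : n ∘ swap i j = n := by
      rw [comp_swap_eq_update, hnij, update_eq_self, ← hnij, update_eq_self]
    simp only [mem_filter, mem_univ, true_and] at hσ ⊢
    rw [coe_mul, ← comp_assoc, hσ, hswap]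

end Sign

section Orbits

variable {α β : Type*} {σ : Perm α}

instance SameCycle.setoid.decidableRel [Fintype α] [DecidableEq α] (σ : Perm α) :
    DecidableRel (SameCycle.setoid σ).r :=
  inferInstanceAs (DecidableRel σ.SameCycle)

theorem comp_pow_eq_self_of_comp_eq_self {n : α → β} (h : n ∘ σ = n) (i : ℕ) :
    n ∘ ⇑(σ ^ i) = n := by
  induction i with
  | zero => rfl
  | succ i ih => rw [pow_succ, coe_mul, ← comp_assoc, ih, h]

theorem SameCycle.apply_eq_of_comp_eq_self [Finite α] {n : α → β} (h : n ∘ σ = n) {x y : α}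
    (hxy : σ.SameCycle x y) : n x = n y := by
  obtain ⟨i, -, rfl⟩ := hxy.exists_pow_eq'
  exact (congrFun (comp_pow_eq_self_of_comp_eq_self h i) x).symm

theorem sum_filter_comp_eq_self_eq_sum_quotient [Fintype α] [DecidableEq α] [Fintype β]
    [DecidableEq β] {M : Type*} [AddCommMonoid M] (σ : Perm α) (F : (α → β) → M) :
    ∑ n ∈ univ.filter (fun n : α → β => n ∘ σ = n), F n =
      ∑ g : Quotient (SameCycle.setoid σ) → β, F (g ∘ Quotient.mk _) := by
  rw [← sum_image fun g _ g' _ h => Quotient.mk_surjective.injective_comp_right h]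
  congr 1
  ext n
  simp only [mem_filter, mem_univ, true_and, mem_image]
  constructor
  · intro h
    exact ⟨Quotient.lift n fun x y => SameCycle.apply_eq_of_comp_eq_self h, rfl⟩
  · rintro ⟨g, rfl⟩
    funext x
    exact congrArg g (Quotient.sound (sameCycle_apply_left.2 (SameCycle.refl σ x)))

end Orbits

theorem sum_prod_comp_eq_prod_sum_fiber {α Q β R : Type*} [Fintype α] [Fintype Q]
    [DecidableEq Q] [Fintype β] [CommSemiring R] (π : α → Q) (f : β → α → R) :
    ∑ g : Q → β, ∏ j, f (g (π j)) j = ∏ q, ∑ x, ∏ j ∈ univ.filter (π · = q), f x j := by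
  rw [Fintype.prod_sum]
  refine sum_congr rfl fun g _ => ?_
  rw [← prod_fiberwise univ π fun j => f (g (π j)) j]
  refine prod_congr rfl fun q _ => prod_congr rfl fun j hj => ?_
  rw [(mem_filter.1 hj).2]

theorem prod_orbits_eq_prod_quotient {m : ℕ} (σ : Perm (Fin m)) {M : Type*} [CommMonoid M]
    (F : Finset (Fin m) → M) :
    ∏ O ∈ orbits σ, F O =
      ∏ q : Quotient (SameCycle.setoid σ), F (univ.filter (Quotient.mk _ · = q)) := by
  set fiber := fun q : Quotient (SameCycle.setoid σ) => univ.filter (Quotient.mk _ · = q)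
  have horbits : orbits σ = univ.image fiber := by
    rw [← image_univ_of_surjective Quotient.mk_surjective, image_image, orbits]
    congr 1
    funext j
    ext i
    simp only [fiber, comp_apply, mem_filter, mem_univ, true_and, Quotient.eq]
    exact sameCycle_comm
  have hfiber : Injective fiber := by
    intro q q' h
    induction q using Quotient.inductionOn with | h j => ?_
    have hj : j ∈ fiber ⟦j⟧ := by simp [fiber]
    rw [h] at hj
    exact (mem_filter.1 hj).2
  rw [horbits, prod_image hfiber.injOn]

theorem prod_orbits_sum_eq_sum_filter_comp_eq_self {R : Type*} [CommSemiring R] {m : ℕ}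
    (σ : Perm (Fin m)) (N : ℕ) (f : ℕ → Fin m → R) :
    ∏ O ∈ orbits σ, ∑ x ∈ range N, ∏ j ∈ O, f x j =
      ∑ n ∈ univ.filter (fun n : Fin m → Fin N => n ∘ σ = n), ∏ j, f (n j) j := by
  rw [prod_orbits_eq_prod_quotient, sum_filter_comp_eq_self_eq_sum_quotient]
  simp only [comp_apply]
  rw [sum_prod_comp_eq_prod_sum_fiber (Quotient.mk _) fun (x : Fin N) j => f x j]
  exact prod_congr rfl fun q _ =>
    (Fin.sum_univ_eq_sum_range (fun x => ∏ j ∈ univ.filter (Quotient.mk _ · = q), f x j) _).symm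

theorem stmt4 (a : ℕ → ℕ → ℂ) (N m : ℕ) (k : Fin m → ℕ) :
    ∑ n ∈ (Finset.univ : Finset (Fin m → Fin N)).filter Function.Injective,
      ∏ j, a (n j) (k j)
    = ∑ σ : Equiv.Perm (Fin m), ((Equiv.Perm.sign σ : ℤ) : ℂ) *
        ∏ O ∈ orbits σ, ∑ n ∈ Finset.range N, ∏ j ∈ O, a n (k j) := by
  symm
  calc _ = ∑ σ : Perm (Fin m), ∑ n ∈ univ.filter (fun n : Fin m → Fin N => n ∘ σ = n),
          ((sign σ : ℤ) : ℂ) * ∏ j, a (n j) (k j) := by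
        simp_rw [prod_orbits_sum_eq_sum_filter_comp_eq_self _ N fun x j => a x (k j),
          mul_sum]
    _ = ∑ n : Fin m → Fin N, ∑ σ ∈ univ.filter (fun σ : Perm (Fin m) => n ∘ σ = n),
          ((sign σ : ℤ) : ℂ) * ∏ j, a (n j) (k j) := sum_comm' (by simp)
    _ = _ := by
        simp_rw [← sum_mul, ← Int.cast_sum, sum_sign_filter_comp_eq_self, sum_filter]
        simp
end

section
/- For a : ℕ → ℕ → ℂ and finite N, the coefficient of λ³ in ∏_{n<N} (1 + ∑_k a n k · λᵏ) equals ∑ a_{n,3} + (∑ a_{n,1})(∑ a_{n,2}) − ∑ a_{n,1}a_{n,2} + (1/6)(∑ a_{n,1})³ − (1/2)(∑ a_{n,1})(∑ a_{n,1}²) + (1/3) ∑ a_{n,1}³, all sums over n < N. -/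
/-!
Multiplying a power series `p` by one more factor `1 + ∑ₖ cₖ λᵏ` adds `∑_{i<k} pᵢ c_{k-i}` to
its `k`-th coefficient. Induction on the number of factors therefore determines the coefficients
of `λ⁰, …, λ³` one after the other, each step being a polynomial identity in the new factor's
coefficients and the sums over the old ones.
-/

open Finset PowerSeries

section CommRing

variable {R : Type*} [CommRing R]

theorem coeff_mul_mk_one_add (p : R⟦X⟧) (c : ℕ → R) (k : ℕ) :
    coeff k (p * mk fun j => if j = 0 then 1 else c j)
      = coeff k p + ∑ i ∈ range k, coeff i p * c (k - i) := by
  rw [coeff_mul, Nat.sum_antidiagonal_eq_sum_range_succ_mk, sum_range_succ]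
  simp only [coeff_mk, Nat.sub_self, if_true, mul_one]
  rw [add_comm]
  refine congrArg _ (sum_congr rfl fun i hi => ?_)
  rw [if_neg (by rw [mem_range] at hi; omega)]

variable (a : ℕ → ℕ → R)

theorem coeff_zero_prod_mk_one_add (N : ℕ) :
    coeff 0 (∏ n ∈ range N, mk fun k => if k = 0 then 1 else a n k) = 1 := by
  induction N with
  | zero => simp
  | succ N ih => simp [prod_range_succ, coeff_mul_mk_one_add, ih]

theorem coeff_one_prod_mk_one_add (N : ℕ) :
    coeff 1 (∏ n ∈ range N, mk fun k => if k = 0 then 1 else a n k)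
      = ∑ n ∈ range N, a n 1 := by
  induction N with
  | zero => simp
  | succ N ih =>
    simp [prod_range_succ, coeff_mul_mk_one_add, ih, coeff_zero_prod_mk_one_add, sum_range_succ]

end CommRing

section Field

variable {K : Type*} [Field K] [CharZero K] (a : ℕ → ℕ → K)

theorem coeff_two_prod_mk_one_add (N : ℕ) :
    coeff 2 (∏ n ∈ range N, mk fun k => if k = 0 then 1 else a n k)
      = ∑ n ∈ range N, a n 2 + (1 / 2) * (∑ n ∈ range N, a n 1) ^ 2
        - (1 / 2) * ∑ n ∈ range N, a n 1 ^ 2 := by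
  induction N with
  | zero => simp
  | succ N ih =>
    simp only [prod_range_succ, coeff_mul_mk_one_add, ih, coeff_zero_prod_mk_one_add,
      coeff_one_prod_mk_one_add, sum_range_succ, sum_range_zero]
    ring

theorem coeff_three_prod_mk_one_add (N : ℕ) :
    coeff 3 (∏ n ∈ range N, mk fun k => if k = 0 then 1 else a n k)
      = ∑ n ∈ range N, a n 3
        + (∑ n ∈ range N, a n 1) * (∑ n ∈ range N, a n 2)
        - ∑ n ∈ range N, a n 1 * a n 2
        + (1 / 6) * (∑ n ∈ range N, a n 1) ^ 3
        - (1 / 2) * (∑ n ∈ range N, a n 1) * (∑ n ∈ range N, a n 1 ^ 2)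
        + (1 / 3) * ∑ n ∈ range N, a n 1 ^ 3 := by
  induction N with
  | zero => simp
  | succ N ih =>
    simp only [prod_range_succ, coeff_mul_mk_one_add, ih, coeff_zero_prod_mk_one_add,
      coeff_one_prod_mk_one_add, coeff_two_prod_mk_one_add, sum_range_succ, sum_range_zero]
    ring

end Field

theorem stmt6 (a : ℕ → ℕ → ℂ) (N : ℕ) :
    PowerSeries.coeff (R := ℂ) 3
        (∏ n ∈ Finset.range N, PowerSeries.mk fun k => if k = 0 then 1 else a n k)
    = ∑ n ∈ Finset.range N, a n 3
      + (∑ n ∈ Finset.range N, a n 1) * (∑ n ∈ Finset.range N, a n 2)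
      - ∑ n ∈ Finset.range N, a n 1 * a n 2
      + (1 / 6) * (∑ n ∈ Finset.range N, a n 1) ^ 3
      - (1 / 2) * (∑ n ∈ Finset.range N, a n 1) * (∑ n ∈ Finset.range N, (a n 1) ^ 2)
      + (1 / 3) * ∑ n ∈ Finset.range N, (a n 1) ^ 3 :=
  coeff_three_prod_mk_one_add a N
end

section
/- For a : ℕ → ℂ, N ∈ ℕ, and m ∈ ℕ, the sum over injective m-tuples n : Fin m → Fin N of ∏_j a(n j) equals ∑_{σ ∈ S_m} sign(σ) ∏_{O ∈ orbits(σ)} P_{|O|}, where P_j := ∑_{n < N} (a n)^j. Equivalently, m! · e_m(a 0, …, a (N−1)) = ∑_{σ ∈ S_m} sign(σ) ∏_{O ∈ orbits(σ)} P_{|O|}, relating elementary symmetric polynomials to power sums via a signed sum over the symmetric group. -/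
open Finset

/-! Expanding each factor `∑ₙ aₙ ^ |O|` as `∑ₙ ∏_{j ∈ O} aₙ` shows that the orbit product of `σ`
is the sum of `∏ⱼ a (n j)` over the tuples `n` constant on the orbits of `σ`, i.e. with
`n ∘ σ = n`. Exchanging the sums over `σ` and `n`, the coefficient of a tuple `n` is the sum of
the signs over its stabiliser: `1` if `n` is injective (the stabiliser is trivial) and `0`
otherwise (multiplying by the transposition of two indices where `n` agrees is a sign-reversing
involution). Finally, an injective tuple is an `m`-subset of values together with one of the `m!`
bijections onto it. -/

namespace Finpartition

variable {α : Type*} [Fintype α] [DecidableEq α] (P : Finpartition (univ : Finset α))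

theorem prod_parts_pow_card {M : Type*} [CommMonoid M] (g : P.parts → M) :
    ∏ t : P.parts, g t ^ #t.1 = ∏ a, g ⟨P.part a, P.part_mem.2 (mem_univ a)⟩ := by
  rw [← prod_fiberwise univ (fun a => (⟨P.part a, P.part_mem.2 (mem_univ a)⟩ : P.parts))]
  refine Fintype.prod_congr _ _ fun t => ?_
  have hfiber :
      ({a | (⟨P.part a, P.part_mem.2 (mem_univ a)⟩ : P.parts) = t} : Finset α) = t.1 := by
    ext a
    simp [Subtype.ext_iff, P.part_eq_iff_mem t.2]
  rw [prod_congr rfl fun a ha => congrArg g (mem_filter.1 ha).2, prod_const, hfiber]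

theorem prod_parts_sum_pow_card {β R : Type*} [Fintype β] [DecidableEq β] [CommSemiring R]
    (f : β → R) :
    ∏ t ∈ P.parts, ∑ x, f x ^ #t =
      ∑ n ∈ univ.filter (fun n : α → β => ∀ a b, P.part a = P.part b → n a = n b),
        ∏ a, f (n a) := by
  have rep (t : P.parts) : ∃ a, a ∈ t.1 := P.nonempty_of_mem_parts t.2
  calc ∏ t ∈ P.parts, ∑ x, f x ^ #t
      = ∑ g : P.parts → β, ∏ t : P.parts, f (g t) ^ #t.1 := by
        rw [← prod_coe_sort, Fintype.prod_sum]
    _ = ∑ g : P.parts → β, ∏ a, f (g ⟨P.part a, P.part_mem.2 (mem_univ a)⟩) := by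
        simp_rw [P.prod_parts_pow_card]
    _ = _ := by
      refine sum_nbij' (fun g a => g ⟨P.part a, P.part_mem.2 (mem_univ a)⟩)
        (fun n t => n (rep t).choose) ?_ (fun _ _ => mem_univ _) ?_ ?_ fun _ _ => rfl
      · intro g _
        simp only [mem_filter, mem_univ, true_and]
        intro a b hab
        simp only [hab]
      · intro g _
        funext t
        simp only [P.part_eq_of_mem t.2 (rep t).choose_spec]
      · intro n hn
        funext a
        exact (mem_filter.1 hn).2 _ _
          (P.part_eq_of_mem (P.part_mem.2 (mem_univ a)) (rep _).choose_spec)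

theorem part_ofSetoid_eq_iff {s : Setoid α} [DecidableRel s] {a b : α} :
    (ofSetoid s).part a = (ofSetoid s).part b ↔ s a b := by
  rw [← mem_part_iff_part_eq_part _ (mem_univ a) (mem_univ b), mem_part_ofSetoid_iff_rel]
  exact ⟨s.symm, s.symm⟩

end Finpartition

namespace Equiv.Perm

theorem apply_eq_of_sameCycle {α β : Type*} {σ : Perm α} {n : α → β} (hn : n ∘ σ = n) {a b : α}
    (hab : σ.SameCycle a b) : n a = n b := by
  obtain ⟨k, rfl⟩ := hab
  induction k using Int.induction_on with
  | zero => simp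
  | succ k ih =>
    rw [ih, add_comm, zpow_add, zpow_one, mul_apply]
    exact (congrFun hn _).symm
  | pred k ih =>
    rw [ih, sub_eq_add_neg, add_comm, zpow_add, zpow_neg_one, mul_apply]
    simpa using congrFun hn (σ⁻¹ ((σ ^ (-(k : ℤ))) a))

instance SameCycle.decidableRelSetoid {α : Type*} [Fintype α] [DecidableEq α] (σ : Perm α) :
    DecidableRel (SameCycle.setoid σ) :=
  inferInstanceAs (DecidableRel σ.SameCycle)

theorem sum_sign_filter_comp_eq_self {α β : Type*} [Fintype α] [DecidableEq α]
    [DecidableEq β] (n : α → β) :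
    ∑ σ ∈ univ.filter (fun σ : Perm α => n ∘ σ = n), (sign σ : ℤ) =
      if Function.Injective n then 1 else 0 := by
  split_ifs with hn
  · have hstab : univ.filter (fun σ : Perm α => n ∘ σ = n) = {1} := by
      ext σ
      simp only [mem_filter, mem_univ, true_and, mem_singleton]
      exact ⟨fun h => ext fun a => congrFun (hn.comp_left h) a, fun h => h ▸ rfl⟩
    simp [hstab]
  · obtain ⟨i, j, hij, hne⟩ := Function.not_injective_iff.1 hn
    have hswap : n ∘ swap i j = n := by
      funext k
      simp only [Function.comp_apply, swap_apply_def]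
      split_ifs <;> simp_all
    refine sum_involution (fun σ _ => swap i j * σ) (fun σ _ => ?_) (fun σ _ _ h => ?_)
      (fun σ hσ => ?_) fun σ _ => swap_mul_self_mul i j σ
    · rw [sign_mul, sign_swap hne]
      push_cast
      ring
    · exact hne (swap_eq_one_iff.1 (mul_eq_right.1 h))
    · simp only [mem_filter, mem_univ, true_and] at hσ ⊢
      rw [coe_mul, ← Function.comp_assoc, hswap, hσ]

end Equiv.Perm

theorem orbits_eq_parts {m : ℕ} (σ : Equiv.Perm (Fin m)) :
    orbits σ = (Finpartition.ofSetoid (Equiv.Perm.SameCycle.setoid σ)).parts := rfl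

theorem prod_orbits_sum_pow_card {m : ℕ} {β R : Type*} [Fintype β] [DecidableEq β]
    [CommSemiring R] (σ : Equiv.Perm (Fin m)) (f : β → R) :
    ∏ O ∈ orbits σ, ∑ x, f x ^ #O =
      ∑ n ∈ univ.filter (fun n : Fin m → β => n ∘ σ = n), ∏ j, f (n j) := by
  rw [orbits_eq_parts]
  convert Finpartition.prod_parts_sum_pow_card _ f using 2
  ext n
  simp only [mem_filter, mem_univ, true_and, Finpartition.part_ofSetoid_eq_iff]
  exact ⟨fun hn a b hab => Equiv.Perm.apply_eq_of_sameCycle hn hab,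
    fun hn => funext fun j => hn _ _ (Equiv.Perm.sameCycle_apply_left.2 .rfl)⟩

theorem sum_injective_prod_eq_sum_sign_mul {α β R : Type*} [Fintype α] [DecidableEq α]
    [Fintype β] [DecidableEq β] [CommRing R] (f : β → R) :
    ∑ n ∈ univ.filter (fun n : α → β => Function.Injective n), ∏ a, f (n a) =
      ∑ σ : Equiv.Perm α, ((Equiv.Perm.sign σ : ℤ) : R) *
        ∑ n ∈ univ.filter (fun n : α → β => n ∘ σ = n), ∏ a, f (n a) := by
  calc ∑ n ∈ univ.filter (fun n : α → β => Function.Injective n), ∏ a, f (n a)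
      = ∑ n : α → β, ((∑ σ ∈ univ.filter (fun σ : Equiv.Perm α => n ∘ σ = n),
          (Equiv.Perm.sign σ : ℤ) : ℤ) : R) * ∏ a, f (n a) := by
        rw [sum_filter]
        refine sum_congr rfl fun n _ => ?_
        rw [Equiv.Perm.sum_sign_filter_comp_eq_self]
        split_ifs <;> simp
    _ = _ := by
        simp only [Int.cast_sum, sum_filter, sum_mul, mul_sum, apply_ite, ite_mul,
          Int.cast_zero, zero_mul, mul_zero]
        exact sum_comm

theorem card_filter_injective_image_eq {α β : Type*} [Fintype α] [DecidableEq α] [Fintype β]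
    [DecidableEq β] {s : Finset β} (hs : #s = Fintype.card α) :
    #(univ.filter fun n : α → β => Function.Injective n ∧ univ.image n = s) =
      (Fintype.card α).factorial := by
  rw [← Fintype.card_equiv (Fintype.equivOfCardEq (by simp [hs]) : α ≃ s), ← card_univ]
  refine (card_bij (fun e _ a => (e a : β)) (fun e _ => ?_) (fun e₁ _ e₂ _ h => ?_)
    fun n hn => ?_).symm
  · refine mem_filter.2 ⟨mem_univ _, Subtype.val_injective.comp e.injective, ?_⟩
    ext b
    refine ⟨fun hb => ?_, fun hb => ?_⟩
    · obtain ⟨a, -, rfl⟩ := mem_image.1 hb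
      exact (e a).2
    · exact mem_image.2 ⟨e.symm ⟨b, hb⟩, mem_univ _, by simp⟩
  · exact Equiv.ext fun a => Subtype.ext (congrFun h a)
  · obtain ⟨hinj, himg⟩ := (mem_filter.1 hn).2
    have hmem (a : α) : n a ∈ s := himg ▸ mem_image_of_mem n (mem_univ a)
    have hsurj : Function.Surjective fun a => (⟨n a, hmem a⟩ : s) := by
      rintro ⟨b, hb⟩
      obtain ⟨a, -, rfl⟩ := mem_image.1 (himg ▸ hb)
      exact ⟨a, rfl⟩
    exact ⟨.ofBijective _ ⟨fun a₁ a₂ h => hinj (congrArg Subtype.val h), hsurj⟩, mem_univ _, rfl⟩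

theorem sum_injective_prod_eq_factorial_mul {α β R : Type*} [Fintype α] [DecidableEq α]
    [Fintype β] [DecidableEq β] [CommSemiring R] (f : β → R) :
    ∑ n ∈ univ.filter (fun n : α → β => Function.Injective n), ∏ a, f (n a) =
      ((Fintype.card α).factorial : R) *
        ∑ s ∈ univ.powersetCard (Fintype.card α), ∏ b ∈ s, f b := by
  have himage (n : α → β) (hn : n ∈ univ.filter fun n : α → β => Function.Injective n) :
      univ.image n ∈ univ.powersetCard (Fintype.card α) := by
    rw [mem_powersetCard, card_image_of_injective _ (mem_filter.1 hn).2]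
    exact ⟨subset_univ _, card_univ⟩
  rw [← sum_fiberwise_of_maps_to himage, mul_sum]
  refine sum_congr rfl fun s hs => ?_
  calc ∑ n ∈ (univ.filter fun n : α → β => Function.Injective n).filter (univ.image · = s),
        ∏ a, f (n a)
      = ∑ n ∈ univ.filter (fun n : α → β => Function.Injective n ∧ univ.image n = s),
          ∏ b ∈ s, f b := by
        rw [filter_filter]
        refine sum_congr rfl fun n hn => ?_
        obtain ⟨hinj, rfl⟩ := (mem_filter.1 hn).2
        rw [prod_image hinj.injOn]
    _ = _ := by
        rw [sum_const, card_filter_injective_image_eq (mem_powersetCard.1 hs).2, nsmul_eq_mul]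

theorem Fin.sum_powersetCard_prod {R : Type*} [CommSemiring R] (a : ℕ → R) (N k : ℕ) :
    ∑ s ∈ (univ : Finset (Fin N)).powersetCard k, ∏ i ∈ s, a i =
      ∑ s ∈ (range N).powersetCard k, ∏ i ∈ s, a i := by
  rw [← Nat.Iio_eq_range, ← Fin.map_valEmbedding_univ, powersetCard_map, sum_map]
  refine sum_congr rfl fun s _ => ?_
  rw [RelEmbedding.coe_toEmbedding, mapEmbedding_apply, prod_map]
  rfl

theorem stmt19 (a : ℕ → ℂ) (N m : ℕ) :
    (∑ n ∈ (Finset.univ : Finset (Fin m → Fin N)).filter Function.Injective,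
        ∏ j, a (n j)
      = ∑ σ : Equiv.Perm (Fin m), ((Equiv.Perm.sign σ : ℤ) : ℂ) *
          ∏ O ∈ orbits σ, ∑ n ∈ Finset.range N, (a n) ^ O.card)
    ∧ ((Nat.factorial m : ℂ) *
          ∑ s ∈ (Finset.range N).powersetCard m, ∏ i ∈ s, a i
        = ∑ σ : Equiv.Perm (Fin m), ((Equiv.Perm.sign σ : ℤ) : ℂ) *
            ∏ O ∈ orbits σ, ∑ n ∈ Finset.range N, (a n) ^ O.card) := by
  have hpower (σ : Equiv.Perm (Fin m)) :
      ∏ O ∈ orbits σ, ∑ n ∈ range N, a n ^ #O =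
        ∑ n ∈ univ.filter (fun n : Fin m → Fin N => n ∘ σ = n), ∏ j, a (n j) := by
    rw [← prod_orbits_sum_pow_card (β := Fin N) σ (fun i => a i)]
    exact prod_congr rfl fun O _ => (Fin.sum_univ_eq_sum_range (a · ^ #O) N).symm
  have hsign : ∑ n ∈ univ.filter (fun n : Fin m → Fin N => Function.Injective n), ∏ j, a (n j)
      = ∑ σ : Equiv.Perm (Fin m), ((Equiv.Perm.sign σ : ℤ) : ℂ) *
          ∏ O ∈ orbits σ, ∑ n ∈ range N, a n ^ #O := by
    simp only [hpower]
    exact sum_injective_prod_eq_sum_sign_mul (β := Fin N) (fun i => a i)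
  refine ⟨hsign, ?_⟩
  rw [← hsign, sum_injective_prod_eq_factorial_mul (β := Fin N) (fun i => a i), Fintype.card_fin,
    Fin.sum_powersetCard_prod]
end
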